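/- arXiv:1504.07500 — 3 statements merged into one kernel-verified Lean document; each statement's English description precedes it below -/
import Mathlib

section
/- If K = ℚ(√(A(Δ + B√Δ))) with Δ = B² + C² squarefree (B, C > 0), A odd squarefree, gcd(A,Δ)=1, then K is a cyclic quartic extension of ℚ, i.e., Gal(K/ℚ) ≅ ℤ/4ℤ. -/
/-!
Work over any field `F` with `2 ≠ 0` in which `d = b² + c²` is not a square; let `s = √d` and
`θ² = a (d + b s)` with `a ≠ 0`. Then `t = a c s / θ` satisfies `t² = a (d - b s)`, since
`(d + b s)(d - b s) = c² d`; so `±θ, ±t` are the roots of `(X² - a d)² - a² b² d`.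
A norm computation shows `θ ∉ F(s)`, hence `[F(θ) : F] = 4` and this quartic is the
minimal polynomial of `θ`. The automorphism `σ : θ ↦ t` sends `s ↦ -s`, hence `t ↦ -θ`, so
`σ² θ = -θ` and `σ` has order `4 = [F(θ) : F]`: the extension is Galois with cyclic group.
Over `ℚ`, a squarefree `Δ > 1` is not a square.
-/

open Polynomial IntermediateField Module

section QuadraticExtension

variable {F K : Type*} [Field F] [Field K] [Algebra F K]

theorem notMem_range_algebraMap_of_sq_eq {x : K} {c : F} (hx : x ^ 2 = algebraMap F K c)
    (hc : ¬IsSquare c) : x ∉ (algebraMap F K).range := by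
  rintro ⟨y, rfl⟩
  exact hc ⟨y, (algebraMap F K).injective (by rw [map_mul, ← sq, hx])⟩

theorem eq_zero_of_algebraMap_add_algebraMap_mul_eq_zero {x : K}
    (hxF : x ∉ (algebraMap F K).range) {u v : F}
    (h : algebraMap F K u + algebraMap F K v * x = 0) : u = 0 ∧ v = 0 := by
  obtain rfl | hv := eq_or_ne v 0
  · simpa using h
  refine absurd ⟨-u / v, ?_⟩ hxF
  rw [map_div₀, map_neg, div_eq_iff (by simpa using hv)]
  linear_combination -h

theorem finrank_adjoin_simple_eq_two {x : K} {c : F} (hx : x ^ 2 = algebraMap F K c)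
    (hxF : x ∉ (algebraMap F K).range) : finrank F F⟮x⟯ = 2 := by
  have hmonic : (X ^ 2 - C c : F[X]).Monic := monic_X_pow_sub_C c two_ne_zero
  have hroot : aeval x (X ^ 2 - C c) = 0 := by simp [hx]
  have hint : IsIntegral F x := ⟨_, hmonic, by simpa [aeval_def] using hroot⟩
  rw [adjoin.finrank hint]
  refine le_antisymm ?_ ((minpoly.two_le_natDegree_iff hint).mpr hxF)
  simpa [natDegree_X_pow_sub_C] using natDegree_le_of_dvd (minpoly.dvd F x hroot) hmonic.ne_zero

theorem exists_eq_algebraMap_add_algebraMap_mul_of_mem_adjoin {x : K} {c : F}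
    (hx : x ^ 2 = algebraMap F K c) {y : K} (hy : y ∈ F⟮x⟯) :
    ∃ u v : F, y = algebraMap F K u + algebraMap F K v * x := by
  have hint : IsIntegral F x := .of_pow two_pos (hx ▸ isIntegral_algebraMap)
  rw [← mem_toSubalgebra, adjoin_simple_toSubalgebra_of_isAlgebraic hint.isAlgebraic] at hy
  induction hy using Algebra.adjoin_induction with
  | mem y hy => exact ⟨0, 1, by simp [Set.mem_singleton_iff.mp hy]⟩
  | algebraMap r => exact ⟨r, 0, by simp⟩
  | add y z _ _ ihy ihz =>
    obtain ⟨u₁, v₁, rfl⟩ := ihy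
    obtain ⟨u₂, v₂, rfl⟩ := ihz
    exact ⟨u₁ + u₂, v₁ + v₂, by simp only [map_add]; ring⟩
  | mul y z _ _ ihy ihz =>
    obtain ⟨u₁, v₁, rfl⟩ := ihy
    obtain ⟨u₂, v₂, rfl⟩ := ihz
    refine ⟨u₁ * u₂ + v₁ * v₂ * c, u₁ * v₂ + v₁ * u₂, ?_⟩
    simp only [map_add, map_mul]
    linear_combination algebraMap F K v₁ * algebraMap F K v₂ * hx

end QuadraticExtension

section PrimitiveElement

variable {F K : Type*} [Field F] [Field K] [Algebra F K] {θ : K}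

theorem minpoly_eq_of_adjoin_eq_top [FiniteDimensional F K] (hgen : Algebra.adjoin F {θ} = ⊤)
    {p : F[X]} (hp : p.Monic) (hdeg : p.natDegree = finrank F K) (hroot : aeval θ p = 0) :
    minpoly F θ = p := by
  have hint : IsIntegral F θ := .of_finite F θ
  refine (eq_of_monic_of_dvd_of_natDegree_le (minpoly.monic hint) hp
    (minpoly.dvd F θ hroot) ?_).symm
  rw [hdeg, (PowerBasis.ofAdjoinEqTop hint hgen).finrank, PowerBasis.ofAdjoinEqTop_dim]

theorem exists_algEquiv_apply_eq_of_adjoin_eq_top [FiniteDimensional F K]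
    (hgen : Algebra.adjoin F {θ} = ⊤) {t : K}
    (ht : aeval t (minpoly F θ) = 0) : ∃ σ : K ≃ₐ[F] K, σ θ = t :=
  let pb := PowerBasis.ofAdjoinEqTop (.of_finite F θ) hgen
  ⟨.ofBijective (pb.lift t ht) (Algebra.IsAlgebraic.algHom_bijective _), pb.lift_gen t ht⟩

theorem orderOf_eq_four_of_sq_apply_eq_neg (h2 : (2 : K) ≠ 0) (hgen : Algebra.adjoin F {θ} = ⊤)
    (hθ : θ ≠ 0) {σ : K ≃ₐ[F] K} (hσ : (σ ^ 2) θ = -θ) : orderOf σ = 4 := by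
  refine orderOf_eq_prime_pow (p := 2) (n := 1) (fun h ↦ ?_) ?_
  · rw [pow_one] at h
    rw [h, AlgEquiv.one_apply] at hσ
    have h2θ : 2 * θ = 0 := by linear_combination hσ
    exact hθ ((mul_eq_zero.mp h2θ).resolve_left h2)
  · refine AlgEquiv.coe_toAlgHom_injective
      (AlgHom.ext_of_adjoin_eq_top hgen (Set.eqOn_singleton.mpr ?_))
    change (σ ^ 2 * σ ^ 2) θ = θ
    rw [AlgEquiv.mul_apply, hσ, map_neg, hσ, neg_neg]

end PrimitiveElement

theorem ne_zero_of_not_isSquare_sq_add_sq {R : Type*} [CommSemiring R] {b c : R}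
    (h : ¬IsSquare (b ^ 2 + c ^ 2)) : b ≠ 0 ∧ c ≠ 0 := by
  constructor <;> rintro rfl <;> exact h ⟨_, by ring⟩

namespace CyclicQuartic

variable {F K : Type*} [Field F] [Field K] [Algebra F K] {a b c d : F} {s θ : K}

theorem notMem_adjoin (hd : d = b ^ 2 + c ^ 2) (hdsq : ¬IsSquare d) (ha : a ≠ 0)
    (hs : s ^ 2 = algebraMap F K d)
    (hθ : θ ^ 2 = algebraMap F K a * (algebraMap F K d + algebraMap F K b * s)) :
    θ ∉ F⟮s⟯ := by
  intro hθs
  obtain ⟨u, v, rfl⟩ := exists_eq_algebraMap_add_algebraMap_mul_of_mem_adjoin hs hθs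
  obtain ⟨h₁, h₂⟩ := eq_zero_of_algebraMap_add_algebraMap_mul_eq_zero
    (notMem_range_algebraMap_of_sq_eq hs hdsq) (u := u ^ 2 + v ^ 2 * d - a * d)
    (v := 2 * u * v - a * b) (by
      simp only [map_sub, map_add, map_mul, map_pow, map_ofNat]
      linear_combination hθ - algebraMap F K v ^ 2 * hs)
  have hac : a * c ≠ 0 := mul_ne_zero ha (ne_zero_of_not_isSquare_sq_add_sq (hd ▸ hdsq)).2
  -- `u ^ 2 - v ^ 2 * d` is the norm of `θ = u + v s`, and `N(θ) ^ 2 = N(θ ^ 2) = a ^ 2 c ^ 2 d`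
  refine hdsq ⟨(u ^ 2 - v ^ 2 * d) / (a * c), ?_⟩
  rw [div_mul_div_comm, eq_div_iff (mul_ne_zero hac hac)]
  linear_combination
    -(u ^ 2 + v ^ 2 * d + a * d) * h₁ + d * (2 * u * v + a * b) * h₂ - a ^ 2 * d * hd

theorem finrank_eq_four (hd : d = b ^ 2 + c ^ 2) (hdsq : ¬IsSquare d) (ha : a ≠ 0)
    (hs : s ^ 2 = algebraMap F K d)
    (hθ : θ ^ 2 = algebraMap F K a * (algebraMap F K d + algebraMap F K b * s))
    (hgen : Algebra.adjoin F {θ} = ⊤) : finrank F K = 4 := by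
  set E := F⟮s⟯
  have hE : finrank F E = 2 :=
    finrank_adjoin_simple_eq_two hs (notMem_range_algebraMap_of_sq_eq hs hdsq)
  have hθsq_mem : algebraMap F K a * (algebraMap F K d + algebraMap F K b * s) ∈ E :=
    mul_mem (_root_.algebraMap_mem E a) (add_mem (_root_.algebraMap_mem E d)
      (mul_mem (_root_.algebraMap_mem E b) (mem_adjoin_simple_self F s)))
  have htop : E⟮θ⟯ = ⊤ := by
    rw [← restrictScalars_eq_top_iff (K := F), restrictScalars_adjoin, eq_top_iff,
      ← toSubalgebra_le_toSubalgebra, top_toSubalgebra, ← hgen]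
    exact (algebra_adjoin_le_adjoin F {θ}).trans (adjoin.mono F _ _ Set.subset_union_right)
  have hKE : finrank E K = 2 := by
    rw [← finrank_top', ← htop]
    refine finrank_adjoin_simple_eq_two (c := ⟨_, hθsq_mem⟩) hθ ?_
    rintro ⟨y, rfl⟩
    exact notMem_adjoin hd hdsq ha hs hθ y.2
  rw [← finrank_mul_finrank F E K, hE, hKE]

theorem exists_mul_eq_and_sq_eq (hd : d = b ^ 2 + c ^ 2) (hθ0 : θ ≠ 0)
    (hs : s ^ 2 = algebraMap F K d)
    (hθ : θ ^ 2 = algebraMap F K a * (algebraMap F K d + algebraMap F K b * s)) :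
    ∃ t : K, θ * t = algebraMap F K (a * c) * s ∧
      t ^ 2 = algebraMap F K a * (algebraMap F K d - algebraMap F K b * s) := by
  refine ⟨algebraMap F K (a * c) * s / θ, mul_div_cancel₀ _ hθ0, ?_⟩
  have hdK : algebraMap F K d = algebraMap F K b ^ 2 + algebraMap F K c ^ 2 := by simp [hd]
  rw [div_pow, div_eq_iff (pow_ne_zero 2 hθ0), hθ, map_mul]
  linear_combination
    algebraMap F K a ^ 2 * algebraMap F K d * hs - algebraMap F K a ^ 2 * s ^ 2 * hdK

theorem aeval_eq_zero_of_sq_eq (hs : s ^ 2 = algebraMap F K d) {y : K}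
    (hy : y ^ 2 = algebraMap F K a * (algebraMap F K d + algebraMap F K b * s)) :
    aeval y ((X ^ 2 - C (a * d)) ^ 2 - C (a ^ 2 * b ^ 2 * d)) = 0 := by
  simp only [map_sub, map_pow, map_mul, aeval_X, aeval_C, hy]
  linear_combination (algebraMap F K a * algebraMap F K b) ^ 2 * hs

theorem sq_apply_eq_neg {σ : K ≃ₐ[F] K} (ha : a ≠ 0) (hb : b ≠ 0) {t : K} (ht0 : t ≠ 0)
    (hθ : θ ^ 2 = algebraMap F K a * (algebraMap F K d + algebraMap F K b * s))
    (hθt : θ * t = algebraMap F K (a * c) * s)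
    (ht : t ^ 2 = algebraMap F K a * (algebraMap F K d - algebraMap F K b * s))
    (hσ : σ θ = t) : (σ ^ 2) θ = -θ := by
  have hσs : σ s = -s := by
    have h := congrArg σ hθ
    rw [map_pow, hσ, ht, map_mul, map_add, map_mul, AlgEquiv.commutes, AlgEquiv.commutes,
      AlgEquiv.commutes] at h
    have hab : algebraMap F K (a * b) ≠ 0 := by simp [ha, hb]
    refine mul_left_cancel₀ hab ?_
    rw [map_mul]
    linear_combination -h
  have hσt : σ t = -θ := by
    have h := congrArg σ hθt
    rw [map_mul, map_mul, hσ, hσs, AlgEquiv.commutes] at h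
    refine mul_left_cancel₀ ht0 ?_
    linear_combination h + hθt
  rw [pow_two, AlgEquiv.mul_apply, hσ, hσt]

theorem isGalois_and_nonempty_mulEquiv_zmod_four (h2 : (2 : F) ≠ 0) (hd : d = b ^ 2 + c ^ 2)
    (hdsq : ¬IsSquare d) (ha : a ≠ 0) (hs : s ^ 2 = algebraMap F K d)
    (hθ : θ ^ 2 = algebraMap F K a * (algebraMap F K d + algebraMap F K b * s))
    (hgen : Algebra.adjoin F {θ} = ⊤) :
    IsGalois F K ∧ Nonempty ((K ≃ₐ[F] K) ≃* Multiplicative (ZMod 4)) := by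
  have hfr : finrank F K = 4 := finrank_eq_four hd hdsq ha hs hθ hgen
  have : FiniteDimensional F K := finite_of_finrank_eq_succ hfr
  obtain ⟨hb, hc⟩ := ne_zero_of_not_isSquare_sq_add_sq (hd ▸ hdsq)
  have hθ0 : θ ≠ 0 := fun h ↦ notMem_adjoin hd hdsq ha hs hθ (h ▸ zero_mem _)
  obtain ⟨t, hθt, ht⟩ := exists_mul_eq_and_sq_eq hd hθ0 hs hθ
  have ht0 : t ≠ 0 := by
    rintro rfl
    have hs0 : s = 0 := by simpa [ha, hc] using hθt.symm
    exact hdsq ⟨0, (algebraMap F K).injective (by simp [← hs, hs0])⟩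
  have hmin : minpoly F θ = (X ^ 2 - C (a * d)) ^ 2 - C (a ^ 2 * b ^ 2 * d) :=
    minpoly_eq_of_adjoin_eq_top hgen (by monicity!) (by rw [hfr]; compute_degree!)
      (aeval_eq_zero_of_sq_eq hs hθ)
  obtain ⟨σ, hσ⟩ := exists_algEquiv_apply_eq_of_adjoin_eq_top hgen (t := t) (by
    rw [hmin, ← neg_sq b]
    exact aeval_eq_zero_of_sq_eq hs (by rw [ht, map_neg]; ring))
  have hσ4 : orderOf σ = 4 := orderOf_eq_four_of_sq_apply_eq_neg
    (by rw [← map_ofNat (algebraMap F K) 2]; exact (_root_.map_ne_zero _).mpr h2) hgen hθ0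
    (sq_apply_eq_neg ha hb ht0 hθ hθt ht hσ)
  have hcard : Nat.card (K ≃ₐ[F] K) = 4 :=
    le_antisymm (hfr ▸ Nat.card_eq_fintype_card (α := K ≃ₐ[F] K) ▸ AlgEquiv.card_le)
      (hσ4 ▸ orderOf_le_card)
  have : IsCyclic (K ≃ₐ[F] K) := isCyclic_of_orderOf_eq_card σ (hσ4.trans hcard.symm)
  exact ⟨.of_card_aut_eq_finrank F K (hcard.trans hfr.symm),
    ⟨mulEquivOfCyclicCardEq (hcard.trans (by simp))⟩⟩

end CyclicQuartic

theorem cyclic_quartic_galois_group_general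
    (A B C Δ : ℤ) (hAsf : Squarefree A)
    (hΔ : Δ = B ^ 2 + C ^ 2) (hB : 0 < B) (hC : 0 < C) (hΔsf : Squarefree Δ)
    (K : Type*) [Field K] [NumberField K] (θ s : K)
    (hs : s ^ 2 = (Δ : K)) (hθ : θ ^ 2 = (A : K) * ((Δ : K) + (B : K) * s))
    (hgen : Algebra.adjoin ℚ {θ} = ⊤) :
    IsGalois ℚ K ∧ Nonempty ((K ≃ₐ[ℚ] K) ≃* Multiplicative (ZMod 4)) := by
  have hΔsq : ¬IsSquare (Δ : ℚ) := by
    rw [Rat.isSquare_intCast_iff]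
    rintro ⟨r, hr⟩
    rcases Int.isUnit_iff.mp (hΔsf r (hr ▸ dvd_rfl)) with rfl | rfl <;> nlinarith
  exact CyclicQuartic.isGalois_and_nonempty_mulEquiv_zmod_four (a := A) (b := B) (c := C)
    two_ne_zero (by exact_mod_cast hΔ) hΔsq (by exact_mod_cast hAsf.ne_zero) (by simpa using hs)
    (by simpa using hθ) hgen

/-- `K = ℚ(√(A(Δ + B√Δ)))` with `Δ = B² + C²` squarefree (`B, C > 0`), `A` odd
squarefree, `gcd(A, Δ) = 1`, is a cyclic quartic extension of `ℚ`:
it is Galois with `Gal(K/ℚ) ≅ ℤ/4ℤ`. -/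
theorem cyclic_quartic_galois_group
    (A B C Δ : ℤ) (hAsf : Squarefree A) (hAodd : Odd A)
    (hΔ : Δ = B ^ 2 + C ^ 2) (hB : 0 < B) (hC : 0 < C) (hΔsf : Squarefree Δ)
    (hgcd : IsCoprime A Δ)
    (K : Type*) [Field K] [NumberField K] (θ s : K)
    (hs : s ^ 2 = (Δ : K)) (hθ : θ ^ 2 = (A : K) * ((Δ : K) + (B : K) * s))
    (hgen : Algebra.adjoin ℚ {θ} = ⊤) :
    IsGalois ℚ K ∧ Nonempty ((K ≃ₐ[ℚ] K) ≃* Multiplicative (ZMod 4)) :=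
  cyclic_quartic_galois_group_general A B C Δ hAsf hΔ hB hC hΔsf K θ s hs hθ hgen
end

section
/- The map μ₅ : ℍ × ℍ → 𝔖₂ sending (z₁,z₂) to (1/(2√5))·[[(1+√5)z₁ - (1-√5)z₂, 2(z₁-z₂)], [2(z₁-z₂), (-1+√5)z₁ + (1+√5)z₂]] takes values in the surface N₅ = {[[τ₁,τ₂],[τ₂,τ₃]] ∈ 𝔖₂ : -τ₁ + τ₂ + τ₃ = 0}, and conversely every point of N₅ is in the image of μ₅. -/
noncomputable section

/-- The map `μ₅ : ℍ × ℍ → 𝔖₂` of the paper. -/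
def mu5 (z₁ z₂ : ℂ) : Matrix (Fin 2) (Fin 2) ℂ :=
  (1 / (2 * (Real.sqrt 5 : ℂ))) •
    !![(1 + (Real.sqrt 5 : ℂ)) * z₁ - (1 - (Real.sqrt 5 : ℂ)) * z₂, 2 * (z₁ - z₂);
       2 * (z₁ - z₂), (-1 + (Real.sqrt 5 : ℂ)) * z₁ + (1 + (Real.sqrt 5 : ℂ)) * z₂]

/-- Membership in the Siegel upper half space of degree 2: symmetric with
positive definite imaginary part. -/
def InSiegel (Ω : Matrix (Fin 2) (Fin 2) ℂ) : Prop :=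
  Ω.IsSymm ∧ (Matrix.of fun i j => (Ω i j).im).PosDef

/-!
`μ₅(z₁, z₂) = z₁ P + z₂ (1 - P)`, where `P` is the orthogonal projection of `ℝ²` onto the line
through `(φ, 1)`, `φ` the golden ratio. Hence `Im μ₅(z₁, z₂)` acts as `Im z₁` on that line and as
`Im z₂` on its orthogonal complement, so it is positive definite exactly when `z₁, z₂ ∈ ℍ`.
Conversely, `(φ, 1)` is an eigenvector of every symmetric `[[τ₂ + τ₃, τ₂], [τ₂, τ₃]]`, with
eigenvalue `τ₃ + φ τ₂` (and `τ₃ + (1 - φ) τ₂` on the complement), so every such matrix is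
`μ₅` of its two eigenvalues.
-/

theorem IsStarProjection.posSemidef {n R : Type*} [Fintype n] [Ring R] [PartialOrder R]
    [StarRing R] [StarOrderedRing R] {P : Matrix n n R} (hP : IsStarProjection P) :
    P.PosSemidef := by
  have h := Matrix.posSemidef_conjTranspose_mul_self P
  rwa [← Matrix.star_eq_conjTranspose, hP.isSelfAdjoint.star_eq, hP.isIdempotentElem.eq] at h

namespace Matrix

variable {n R : Type*} [Fintype n] [DecidableEq n]
  [CommRing R] [LinearOrder R] [IsStrictOrderedRing R] [StarRing R] [StarOrderedRing R]
  {P : Matrix n n R} {a b : R}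

theorem posDef_smul_add_smul_one_sub (hP : IsStarProjection P) (ha : 0 < a) (hb : 0 < b) :
    (a • P + b • (1 - P)).PosDef := by
  have hsplit : a • P + b • (1 - P) =
      min a b • (1 : Matrix n n R) + ((a - min a b) • P + (b - min a b) • (1 - P)) := by
    simp only [smul_sub, sub_smul]
    abel
  rw [hsplit]
  exact (PosDef.one.smul (lt_min ha hb)).add_posSemidef
    ((hP.posSemidef.smul (sub_nonneg.2 (min_le_left a b))).add
      (hP.one_sub.posSemidef.smul (sub_nonneg.2 (min_le_right a b))))

theorem pos_of_posDef_smul_add_smul_one_sub (hP : IsStarProjection P) (hP₀ : P ≠ 0)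
    (h : (a • P + b • (1 - P)).PosDef) : 0 < a := by
  obtain ⟨x, hx⟩ : ∃ x, P *ᵥ x ≠ 0 := by
    by_contra! hx
    exact hP₀ (ext_iff_mulVec.2 fun v => by simp [hx v])
  have hPx : (a • P + b • (1 - P)) *ᵥ (P *ᵥ x) = a • (P *ᵥ x) := by
    rw [mulVec_mulVec, add_mul, smul_mul_assoc, smul_mul_assoc, hP.isIdempotentElem.eq,
      hP.one_sub_mul_self, smul_zero, add_zero, smul_mulVec]
  have hpos := h.dotProduct_mulVec_pos hx
  rw [hPx, dotProduct_smul, smul_eq_mul] at hpos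
  exact pos_of_mul_pos_left hpos (dotProduct_star_self_pos_iff.2 hx).le

theorem posDef_smul_add_smul_one_sub_iff (hP : IsStarProjection P) (hP₀ : P ≠ 0)
    (hP₁ : P ≠ 1) : (a • P + b • (1 - P)).PosDef ↔ 0 < a ∧ 0 < b := by
  constructor
  · intro h
    refine ⟨pos_of_posDef_smul_add_smul_one_sub hP hP₀ h,
      pos_of_posDef_smul_add_smul_one_sub hP.one_sub (sub_ne_zero.2 hP₁.symm) (b := a) ?_⟩
    rwa [sub_sub_cancel, add_comm]
  · rintro ⟨ha, hb⟩
    exact posDef_smul_add_smul_one_sub hP ha hb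

end Matrix

def goldenProjection : Matrix (Fin 2) (Fin 2) ℝ :=
  (1 / (2 * √5)) • !![1 + √5, 2; 2, -1 + √5]

theorem isStarProjection_goldenProjection : IsStarProjection goldenProjection where
  isSelfAdjoint := by
    ext i j
    fin_cases i <;> fin_cases j <;> simp [goldenProjection]
  isIdempotentElem := by
    have h5 : √5 * √5 = 5 := Real.mul_self_sqrt (by norm_num)
    ext i j
    fin_cases i <;> fin_cases j <;>
      · simp [goldenProjection, Matrix.mul_apply, Fin.sum_univ_two]
        field_simp
        grind

theorem goldenProjection_zero_one_ne_zero : goldenProjection 0 1 ≠ 0 := by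
  simp [goldenProjection]

theorem mu5_eq_smul_add_smul (z₁ z₂ : ℂ) :
    mu5 z₁ z₂ = z₁ • goldenProjection.map (↑) + z₂ • (1 - goldenProjection).map (↑) := by
  have h5 : (√5 : ℂ) ≠ 0 := by exact_mod_cast (by positivity : √5 ≠ 0)
  ext i j
  fin_cases i <;> fin_cases j <;>
  · simp [mu5, goldenProjection]
    field_simp
    ring

theorem mu5_isSymm (z₁ z₂ : ℂ) : (mu5 z₁ z₂).IsSymm := by
  ext i j
  fin_cases i <;> fin_cases j <;> simp [mu5]

theorem inSiegel_mu5_iff {z₁ z₂ : ℂ} : InSiegel (mu5 z₁ z₂) ↔ 0 < z₁.im ∧ 0 < z₂.im := by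
  have him : Matrix.of (fun i j => (mu5 z₁ z₂ i j).im) =
      z₁.im • goldenProjection + z₂.im • (1 - goldenProjection) := by
    ext i j
    simp [mu5_eq_smul_add_smul]
  have hP₀ : goldenProjection ≠ 0 := fun h => goldenProjection_zero_one_ne_zero (by simp [h])
  have hP₁ : goldenProjection ≠ 1 := fun h => goldenProjection_zero_one_ne_zero (by simp [h])
  rw [InSiegel, him,
    Matrix.posDef_smul_add_smul_one_sub_iff isStarProjection_goldenProjection hP₀ hP₁]
  exact and_iff_right (mu5_isSymm z₁ z₂)

theorem mu5_neg_add_add (z₁ z₂ : ℂ) : -(mu5 z₁ z₂ 0 0) + mu5 z₁ z₂ 0 1 + mu5 z₁ z₂ 1 1 = 0 := by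
  have h5 : (√5 : ℂ) ≠ 0 := by exact_mod_cast (by positivity : √5 ≠ 0)
  simp [mu5]
  field_simp
  ring

theorem mu5_eigenvalues_eq {Ω : Matrix (Fin 2) (Fin 2) ℂ} (hΩ : Ω.IsSymm)
    (hrel : -(Ω 0 0) + Ω 0 1 + Ω 1 1 = 0) :
    mu5 ((Ω 0 0 + Ω 1 1 + √5 * Ω 0 1) / 2) ((Ω 0 0 + Ω 1 1 - √5 * Ω 0 1) / 2) = Ω := by
  have h5 : (√5 : ℂ) ≠ 0 := by exact_mod_cast (by positivity : √5 ≠ 0)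
  have h10 : Ω 1 0 = Ω 0 1 := hΩ.apply 0 1
  ext i j
  fin_cases i <;> fin_cases j <;> simp [mu5, h10] <;> field_simp
  · linear_combination 2 * (√5 : ℂ) * hrel
  · ring
  · ring
  · linear_combination -2 * (√5 : ℂ) * hrel

/-- The map `μ₅` takes values in the surface
`N₅ = {[[τ₁,τ₂],[τ₂,τ₃]] ∈ 𝔖₂ : -τ₁ + τ₂ + τ₃ = 0}`, and every point of `N₅`
is in the image of `μ₅`. -/
theorem mu5_image_eq_N5 :
    (∀ z₁ z₂ : ℂ, 0 < z₁.im → 0 < z₂.im →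
      InSiegel (mu5 z₁ z₂) ∧
        -(mu5 z₁ z₂ 0 0) + mu5 z₁ z₂ 0 1 + mu5 z₁ z₂ 1 1 = 0) ∧
    (∀ Ω : Matrix (Fin 2) (Fin 2) ℂ, InSiegel Ω →
      -(Ω 0 0) + Ω 0 1 + Ω 1 1 = 0 →
      ∃ z₁ z₂ : ℂ, 0 < z₁.im ∧ 0 < z₂.im ∧ mu5 z₁ z₂ = Ω) := by
  refine ⟨fun z₁ z₂ h₁ h₂ => ⟨inSiegel_mu5_iff.2 ⟨h₁, h₂⟩, mu5_neg_add_add z₁ z₂⟩,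
    fun Ω hΩ hrel => ?_⟩
  have hμ := mu5_eigenvalues_eq hΩ.1 hrel
  rw [← hμ, inSiegel_mu5_iff] at hΩ
  exact ⟨_, _, hΩ.1, hΩ.2, hμ⟩

end
end

section
/- Let K₀ = ℚ(√5), K = ℚ(√(-(5+√5))), with α = √(-(5+√5)) and β = √(-(5-√5)) chosen with α^σ = β for a generator σ of Gal(K/ℚ). With ζ = α/20 and the ℤ-basis α₁ = 1, α₂ = (1+√5)/2, α₃ = α, α₄ = β of a lattice in K, the alternating form E(x,y) = Tr_{K/ℚ}(ζ x ȳ) (where ȳ is complex conjugation) satisfies E(α₁,α₃) = 1, E(α₂,α₃) = 1, E(α₂,α₄) = 1, and E(α₁,α₂) = E(α₁,α₄) = E(α₃,α₄) = 0. -/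
open IntermediateField


/-- Let `K = ℚ(√(-(5+√5)))`, a cyclic quartic CM field over `ℚ(√5)`, with
`α = √(-(5+√5))`, `β = √(-(5-√5))` (signs fixed through a complex embedding
`φ`), `ζ = α/20` and the basis `α₁ = 1`, `α₂ = (1+√5)/2`, `α₃ = α`, `α₄ = β`.
Then the alternating form `E(x,y) = Tr_{K/ℚ}(ζ·x·ȳ)` (`ȳ` the complex
conjugate of `y`) satisfies `E(α₁,α₃) = E(α₂,α₃) = E(α₂,α₄) = 1` and
`E(α₁,α₂) = E(α₁,α₄) = E(α₃,α₄) = 0`. -/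
theorem riemann_form_gram_entries
    (K : Type*) [Field K] [NumberField K]
    (hdeg : Module.finrank ℚ K = 4)
    (sqrt5 α β : K)
    (hs : sqrt5 ^ 2 = 5)
    (hα : α ^ 2 = -(5 + sqrt5)) (hβ : β ^ 2 = -(5 - sqrt5))
    (hgen : Algebra.adjoin ℚ {α} = ⊤)
    (φ : K →+* ℂ)
    (hφs : φ sqrt5 = (Real.sqrt 5 : ℂ))
    (hφα : φ α = Complex.I * (Real.sqrt (5 + Real.sqrt 5) : ℂ))
    (hφβ : φ β = Complex.I * (Real.sqrt (5 - Real.sqrt 5) : ℂ))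
    (ρ : K ≃ₐ[ℚ] K)
    (hρ : ∀ x : K, φ (ρ x) = starRingEnd ℂ (φ x)) :
    let E : K → K → ℚ := fun x y => Algebra.trace ℚ K ((α / 20) * x * ρ y)
    E 1 α = 1 ∧ E ((1 + sqrt5) / 2) α = 1 ∧ E ((1 + sqrt5) / 2) β = 1 ∧
      E 1 ((1 + sqrt5) / 2) = 0 ∧ E 1 β = 0 ∧ E α β = 0 := by
  intro E
  have hinj : Function.Injective φ := φ.injective
  -- Galois action of ρ on generators
  have hρs : ρ sqrt5 = sqrt5 := by
    apply hinj
    rw [hρ, hφs, Complex.conj_ofReal]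
  have hρα : ρ α = -α := by
    apply hinj
    rw [hρ, hφα, map_neg, hφα, map_mul, Complex.conj_I, Complex.conj_ofReal]
    ring
  have hρβ : ρ β = -β := by
    apply hinj
    rw [hρ, hφβ, map_neg, hφβ, map_mul, Complex.conj_I, Complex.conj_ofReal]
    ring
  have hρmid : ρ ((1 + sqrt5) / 2) = (1 + sqrt5) / 2 := by
    rw [map_div₀, map_add, map_one, hρs, map_ofNat]
  -- α·β = -(2√5)
  have hs5 : Real.sqrt 5 ^ 2 = 5 := Real.sq_sqrt (by norm_num)
  have hs5le : Real.sqrt 5 ≤ 3 := by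
    nlinarith [Real.sqrt_nonneg 5]
  have hab : Real.sqrt (5 + Real.sqrt 5) * Real.sqrt (5 - Real.sqrt 5) = 2 * Real.sqrt 5 := by
    rw [← Real.sqrt_mul (by positivity)]
    rw [show (5 + Real.sqrt 5) * (5 - Real.sqrt 5) = 2 ^ 2 * 5 by nlinarith]
    rw [Real.sqrt_mul (by norm_num), Real.sqrt_sq (by norm_num)]
  have hαβ : α * β = -(2 * sqrt5) := by
    apply hinj
    rw [map_mul, hφα, hφβ, map_neg, map_mul, hφs, map_ofNat]
    have hc : ((Real.sqrt (5 + Real.sqrt 5) : ℂ)) * ((Real.sqrt (5 - Real.sqrt 5) : ℂ))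
        = 2 * ((Real.sqrt 5 : ℝ) : ℂ) := by
      rw [← Complex.ofReal_mul, hab]
      push_cast
      ring
    linear_combination (-1 : ℂ) * hc + ((Real.sqrt (5 + Real.sqrt 5) : ℂ)) *
      ((Real.sqrt (5 - Real.sqrt 5) : ℂ)) * Complex.I_sq
  -- trace values
  have tr1 : Algebra.trace ℚ K 1 = 4 := by
    rw [show (1 : K) = algebraMap ℚ K 1 by simp, Algebra.trace_algebraMap, hdeg]
    norm_num
  have trneg : ∀ x : K, ρ x = -x → Algebra.trace ℚ K x = 0 := by
    intro x h
    have h2 := Algebra.trace_eq_of_algEquiv ρ x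
    rw [h, map_neg] at h2
    linarith
  have trα : Algebra.trace ℚ K α = 0 := trneg α hρα
  have trβ : Algebra.trace ℚ K β = 0 := trneg β hρβ
  have trsα : Algebra.trace ℚ K (sqrt5 * α) = 0 := by
    refine trneg _ ?_
    rw [map_mul, hρs, hρα]; ring
  have trsβ : Algebra.trace ℚ K (sqrt5 * β) = 0 := by
    refine trneg _ ?_
    rw [map_mul, hρs, hρβ]; ring
  have hnr : sqrt5 ∉ (algebraMap ℚ K).range := by
    rintro ⟨q, hq⟩
    have hq2 : q ^ 2 = 5 := by
      have : algebraMap ℚ K (q ^ 2) = algebraMap ℚ K 5 := by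
        rw [map_pow, hq, hs]; norm_num
      exact (algebraMap ℚ K).injective this
    have hirr : Irrational (Real.sqrt 5) := by
      have := (by norm_num : Nat.Prime 5).irrational_sqrt
      simpa using this
    have : Real.sqrt 5 = ((|q| : ℚ) : ℝ) := by
      have : ((q : ℝ)) ^ 2 = 5 := by exact_mod_cast congrArg (Rat.cast : ℚ → ℝ) hq2
      rw [show (5 : ℝ) = ((q : ℝ)) ^ 2 from this.symm, Real.sqrt_sq_eq_abs]
      push_cast
      ring
    exact hirr ⟨|q|, this.symm⟩
  have trs : Algebra.trace ℚ K sqrt5 = 0 := by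
    have hint : IsIntegral ℚ sqrt5 := IsIntegral.of_finite ℚ _
    have hmp : minpoly ℚ sqrt5 = Polynomial.X ^ 2 - Polynomial.C 5 := by
      have hmon : (Polynomial.X ^ 2 - Polynomial.C (5:ℚ)).Monic :=
        Polynomial.monic_X_pow_sub_C _ (by norm_num)
      have hdvd : minpoly ℚ sqrt5 ∣ Polynomial.X ^ 2 - Polynomial.C 5 :=
        minpoly.dvd _ _ (by simp [hs])
      have hd2 : 2 ≤ (minpoly ℚ sqrt5).natDegree := (minpoly.two_le_natDegree_iff hint).mpr hnr
      obtain ⟨c, hc⟩ := hdvd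
      have hcm : c.Monic := by
        have h3 := hmon
        rw [hc] at h3
        exact (minpoly.monic hint).of_mul_monic_left h3
      have hdeg2 : (Polynomial.X ^ 2 - Polynomial.C (5:ℚ)).natDegree = 2 := by
        simp [Polynomial.natDegree_X_pow_sub_C]
      have : 2 = (minpoly ℚ sqrt5).natDegree + c.natDegree := by
        rw [← hdeg2, hc, Polynomial.natDegree_mul (minpoly.ne_zero hint) hcm.ne_zero]
      have hc0 : c.natDegree = 0 := by omega
      rw [hc, Polynomial.eq_one_of_monic_natDegree_zero hcm hc0, mul_one]
    rw [trace_eq_trace_adjoin ℚ sqrt5]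
    have hg : Algebra.trace ℚ ℚ⟮sqrt5⟯ (IntermediateField.AdjoinSimple.gen ℚ sqrt5) = 0 := by
      erw [← IntermediateField.adjoin.powerBasis_gen hint,
        PowerBasis.trace_gen_eq_nextCoeff_minpoly,
        IntermediateField.adjoin.powerBasis_gen hint, IntermediateField.minpoly_gen, hmp]
      simp [Polynomial.nextCoeff]
    erw [hg, smul_zero]
  -- key linearity lemma
  have hcast : ∀ (q : ℚ) (x : K), (q : K) * x = q • x := fun q x => by
    rw [Algebra.smul_def, eq_ratCast (algebraMap ℚ K)]
  have key : ∀ a b c d e f : ℚ,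
      Algebra.trace ℚ K ((a : K) + (b : K) * sqrt5 + (c : K) * α + (d : K) * β
        + (e : K) * (sqrt5 * α) + (f : K) * (sqrt5 * β)) = 4 * a := by
    intro a b c d e f
    rw [show (a : K) = (a : K) * 1 by ring, hcast, hcast, hcast, hcast, hcast, hcast]
    rw [map_add, map_add, map_add, map_add, map_add, map_smul, map_smul, map_smul,
      map_smul, map_smul, map_smul, tr1, trs, trα, trβ, trsα, trsβ]
    simp
    ring
  refine ⟨?_, ?_, ?_, ?_, ?_, ?_⟩
  · show Algebra.trace ℚ K (α / 20 * 1 * ρ α) = 1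
    rw [hρα, show α / 20 * 1 * (-α) = ((1/4 : ℚ) : K) + ((1/20 : ℚ) : K) * sqrt5
      + ((0:ℚ) : K) * α + ((0:ℚ) : K) * β + ((0:ℚ) : K) * (sqrt5 * α)
      + ((0:ℚ) : K) * (sqrt5 * β) by push_cast; linear_combination (-(1:K)/20) * hα,
      key]
    norm_num
  · show Algebra.trace ℚ K (α / 20 * ((1 + sqrt5) / 2) * ρ α) = 1
    rw [hρα, show α / 20 * ((1 + sqrt5) / 2) * (-α) = ((1/4 : ℚ) : K)
      + ((3/20 : ℚ) : K) * sqrt5 + ((0:ℚ) : K) * α + ((0:ℚ) : K) * β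
      + ((0:ℚ) : K) * (sqrt5 * α) + ((0:ℚ) : K) * (sqrt5 * β) by
        push_cast; linear_combination (-(1 + sqrt5)/40) * hα + ((1:K)/40) * hs,
      key]
    norm_num
  · show Algebra.trace ℚ K (α / 20 * ((1 + sqrt5) / 2) * ρ β) = 1
    rw [hρβ, show α / 20 * ((1 + sqrt5) / 2) * (-β) = ((1/4 : ℚ) : K)
      + ((1/20 : ℚ) : K) * sqrt5 + ((0:ℚ) : K) * α + ((0:ℚ) : K) * β
      + ((0:ℚ) : K) * (sqrt5 * α) + ((0:ℚ) : K) * (sqrt5 * β) by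
        push_cast; linear_combination (-(1 + sqrt5)/40) * hαβ + ((1:K)/20) * hs,
      key]
    norm_num
  · show Algebra.trace ℚ K (α / 20 * 1 * ρ ((1 + sqrt5) / 2)) = 0
    rw [hρmid, show α / 20 * 1 * ((1 + sqrt5) / 2) = ((0 : ℚ) : K)
      + ((0 : ℚ) : K) * sqrt5 + ((1/40 : ℚ) : K) * α + ((0:ℚ) : K) * β
      + ((1/40 : ℚ) : K) * (sqrt5 * α) + ((0:ℚ) : K) * (sqrt5 * β) by
        push_cast; ring,
      key]
    norm_num
  · show Algebra.trace ℚ K (α / 20 * 1 * ρ β) = 0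
    rw [hρβ, show α / 20 * 1 * (-β) = ((0 : ℚ) : K)
      + ((1/10 : ℚ) : K) * sqrt5 + ((0 : ℚ) : K) * α + ((0:ℚ) : K) * β
      + ((0 : ℚ) : K) * (sqrt5 * α) + ((0:ℚ) : K) * (sqrt5 * β) by
        push_cast; linear_combination (-(1:K)/20) * hαβ,
      key]
    norm_num
  · show Algebra.trace ℚ K (α / 20 * α * ρ β) = 0
    rw [hρβ, show α / 20 * α * (-β) = ((0 : ℚ) : K)
      + ((0 : ℚ) : K) * sqrt5 + ((0 : ℚ) : K) * α + ((1/4 : ℚ) : K) * β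
      + ((0 : ℚ) : K) * (sqrt5 * α) + ((1/20 : ℚ) : K) * (sqrt5 * β) by
        push_cast; linear_combination (-β/20) * hα,
      key]
    norm_num
end
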